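/- arXiv:math/0503415 — 3 statements merged into one kernel-verified Lean document; each statement's English description precedes it below -/
import Mathlib

section
/- Let x, ψ : [a,b] → ℝ^n and u : [a,b] → ℝ^m be continuously differentiable. Assume that for every t ∈ [a,b] the triple (x,u,ψ) satisfies: (i) the control system x′(t) = φ(t,x(t),u(t)) (= ∇_ψH); (ii) the adjoint system ψ′(t) = −∇ₓH(t,x(t),u(t),ψ(t)); (iii) the maximality condition ∇ᵤH(t,x(t),u(t),ψ(t)) = 0; and (iv) the invariance identity ∂H/∂t · τ(t) + ⟨∇ₓH, ξ(t)⟩ + ⟨∇ᵤH, υ(t)⟩ + ⟨∇_ψH, π(t)⟩ − ⟨π(t), x′(t)⟩ − ⟨ψ(t), ξ′(t)⟩ + H · τ′(t) = 0, where all partial derivatives of H and H itself are evaluated at (t,x(t),u(t),ψ(t)) (ξ′ and τ′ exist since all data are C¹). Then there exists a constant c ∈ ℝ such that ⟨ψ(t), ξ(t)⟩ − H(t,x(t),u(t),ψ(t)) · τ(t) = c for all t ∈ [a,b]. -/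
/-!
Along an extremal the control and adjoint equations make the total derivative of `H` equal to
`∂H/∂t`: the contributions `⟨∇ₓH, ∇_ψH⟩` of `x′ = ∇_ψH` and `⟨∇_ψH, -∇ₓH⟩` of `ψ′ = -∇ₓH`
cancel, and `∇ᵤH = 0` kills the control term. Hence the derivative of `⟨ψ, ξ⟩ - H τ` is minus
the left-hand side of the invariance identity, so it vanishes and the quantity is constant.
-/

open MeasureTheory Set RealInnerProductSpace

noncomputable section

/-- Euclidean space `ℝ^k`. -/
abbrev Vec (k : ℕ) : Type := EuclideanSpace ℝ (Fin k)

/-- The Hamiltonian `H(t,x,u,ψ) = -L(t,x,u) + ⟨ψ, φ(t,x,u)⟩`. -/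
def Ham {n m : ℕ} (L : ℝ → Vec n → Vec m → ℝ) (φ : ℝ → Vec n → Vec m → Vec n) :
    ℝ → Vec n → Vec m → Vec n → ℝ :=
  fun t x u ψ => -L t x u + ⟪ψ, φ t x u⟫

/-- Partial derivative `∂H/∂t`. -/
def Hpt {n m : ℕ} (H : ℝ → Vec n → Vec m → Vec n → ℝ)
    (t : ℝ) (x : Vec n) (u : Vec m) (ψ : Vec n) : ℝ :=
  deriv (fun s => H s x u ψ) t

/-- Partial gradient `∇ₓH`. -/
def Hpx {n m : ℕ} (H : ℝ → Vec n → Vec m → Vec n → ℝ)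
    (t : ℝ) (x : Vec n) (u : Vec m) (ψ : Vec n) : Vec n :=
  gradient (fun y => H t y u ψ) x

/-- Partial gradient `∇ᵤH`. -/
def Hpu {n m : ℕ} (H : ℝ → Vec n → Vec m → Vec n → ℝ)
    (t : ℝ) (x : Vec n) (u : Vec m) (ψ : Vec n) : Vec m :=
  gradient (fun v => H t x v ψ) u

/-- Partial gradient `∇_ψH`. -/
def Hpψ {n m : ℕ} (H : ℝ → Vec n → Vec m → Vec n → ℝ)
    (t : ℝ) (x : Vec n) (u : Vec m) (ψ : Vec n) : Vec n :=
  gradient (fun q => H t x u q) ψ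

open Function

section Prod

variable {𝕜 E F G : Type*} [NontriviallyNormedField 𝕜] [NormedAddCommGroup E] [NormedSpace 𝕜 E]
  [NormedAddCommGroup F] [NormedSpace 𝕜 F] [NormedAddCommGroup G] [NormedSpace 𝕜 G]
  {f : E × F → G} {x : E} {y : F}

theorem DifferentiableAt.fderiv_prod_apply (hf : DifferentiableAt 𝕜 f (x, y)) (v : E) (w : F) :
    fderiv 𝕜 f (x, y) (v, w) =
      fderiv 𝕜 (fun x' => f (x', y)) x v + fderiv 𝕜 (fun y' => f (x, y')) y w := by
  have hx : HasFDerivAt (fun x' => f (x', y)) ((fderiv 𝕜 f (x, y)).comp (.inl 𝕜 E F)) x :=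
    hf.hasFDerivAt.comp x (hasFDerivAt_prodMk_left x y)
  have hy : HasFDerivAt (fun y' => f (x, y')) ((fderiv 𝕜 f (x, y)).comp (.inr 𝕜 E F)) y :=
    hf.hasFDerivAt.comp y (hasFDerivAt_prodMk_right x y)
  rw [hx.fderiv, hy.fderiv]
  exact ((fderiv 𝕜 f (x, y)).comp_inl_add_comp_inr (v, w)).symm

theorem DifferentiableAt.comp_prodMk_right (hf : DifferentiableAt 𝕜 f (x, y)) :
    DifferentiableAt 𝕜 (fun y' => f (x, y')) y :=
  (hf.hasFDerivAt.comp y (hasFDerivAt_prodMk_right x y)).differentiableAt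

end Prod

section Hamiltonian

variable {n m : ℕ}

theorem fderiv_uncurry_apply {H : ℝ → Vec n → Vec m → Vec n → ℝ} {t : ℝ} {x : Vec n} {u : Vec m}
    {ψ : Vec n} (hH : DifferentiableAt ℝ ↿H (t, x, u, ψ)) (s : ℝ) (v : Vec n) (w : Vec m)
    (q : Vec n) :
    fderiv ℝ ↿H (t, x, u, ψ) (s, v, w, q) =
      Hpt H t x u ψ * s + ⟪Hpx H t x u ψ, v⟫ + ⟪Hpu H t x u ψ, w⟫ + ⟪Hpψ H t x u ψ, q⟫ := by
  have hxuψ := hH.comp_prodMk_right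
  have huψ := hxuψ.comp_prodMk_right
  rw [hH.fderiv_prod_apply, hxuψ.fderiv_prod_apply, huψ.fderiv_prod_apply, Hpt, Hpx, Hpu, Hpψ,
    inner_gradient_left, inner_gradient_left, inner_gradient_left]
  dsimp only [HasUncurry.uncurry, id]
  rw [fderiv_eq_smul_deriv, smul_eq_mul, mul_comm]
  ring

theorem Hpψ_ham (L : ℝ → Vec n → Vec m → ℝ) (φ : ℝ → Vec n → Vec m → Vec n)
    (t : ℝ) (x : Vec n) (u : Vec m) (ψ : Vec n) :
    Hpψ (Ham L φ) t x u ψ = φ t x u := by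
  refine HasGradientAt.gradient (hasGradientAt_iff_hasFDerivAt.mpr ?_)
  refine (((InnerProductSpace.toDual ℝ (Vec n) (φ t x u) : Vec n →L[ℝ] ℝ).hasFDerivAt
    (x := ψ)).const_add (-L t x u)).congr_of_eventuallyEq (Filter.Eventually.of_forall fun q => ?_)
  simp [Ham, real_inner_comm]

theorem contDiff_uncurry_ham {k : WithTop ℕ∞} {L : ℝ → Vec n → Vec m → ℝ}
    {φ : ℝ → Vec n → Vec m → Vec n} (hL : ContDiff ℝ k ↿L) (hφ : ContDiff ℝ k ↿φ) :
    ContDiff ℝ k ↿(Ham L φ) := by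
  have hproj : ContDiff ℝ k fun p : ℝ × Vec n × Vec m × Vec n => (p.1, p.2.1, p.2.2.1) := by
    fun_prop
  exact (hL.comp hproj).neg.add (contDiff_snd.snd.snd.inner ℝ (hφ.comp hproj))

theorem hasDerivWithinAt_uncurry_comp {H : ℝ → Vec n → Vec m → Vec n → ℝ} {x ψ : ℝ → Vec n}
    {u : ℝ → Vec m} {x' ψ' : Vec n} {u' : Vec m} {s : Set ℝ} {t : ℝ}
    (hH : DifferentiableAt ℝ ↿H (t, x t, u t, ψ t)) (hx : HasDerivWithinAt x x' s t)
    (hu : HasDerivWithinAt u u' s t) (hψ : HasDerivWithinAt ψ ψ' s t) :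
    HasDerivWithinAt (fun r => H r (x r) (u r) (ψ r))
      (Hpt H t (x t) (u t) (ψ t) + ⟪Hpx H t (x t) (u t) (ψ t), x'⟫
        + ⟪Hpu H t (x t) (u t) (ψ t), u'⟫ + ⟪Hpψ H t (x t) (u t) (ψ t), ψ'⟫) s t := by
  have h := hH.hasFDerivAt.comp_hasDerivWithinAt t
    ((hasDerivWithinAt_id t s).prodMk (hx.prodMk (hu.prodMk hψ)))
  rwa [fderiv_uncurry_apply hH, mul_one] at h

theorem hasDerivWithinAt_hamiltonian_of_extremal {H : ℝ → Vec n → Vec m → Vec n → ℝ}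
    {x ψ : ℝ → Vec n} {u : ℝ → Vec m} {u' : Vec m} {s : Set ℝ} {t : ℝ}
    (hH : DifferentiableAt ℝ ↿H (t, x t, u t, ψ t))
    (hx : HasDerivWithinAt x (Hpψ H t (x t) (u t) (ψ t)) s t) (hu : HasDerivWithinAt u u' s t)
    (hψ : HasDerivWithinAt ψ (-Hpx H t (x t) (u t) (ψ t)) s t)
    (hmax : Hpu H t (x t) (u t) (ψ t) = 0) :
    HasDerivWithinAt (fun r => H r (x r) (u r) (ψ r)) (Hpt H t (x t) (u t) (ψ t)) s t := by
  refine (hasDerivWithinAt_uncurry_comp hH hx hu hψ).congr_deriv ?_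
  rw [hmax, inner_zero_left, inner_neg_right, real_inner_comm]
  ring

theorem hasDerivWithinAt_noether_charge {H : ℝ → Vec n → Vec m → Vec n → ℝ}
    {x ψ ξ : ℝ → Vec n} {u : ℝ → Vec m} {τ : ℝ → ℝ} {u' : Vec m} {ξ' : Vec n} {τ' : ℝ}
    {s : Set ℝ} {t : ℝ}
    (hH : DifferentiableAt ℝ ↿H (t, x t, u t, ψ t))
    (hx : HasDerivWithinAt x (Hpψ H t (x t) (u t) (ψ t)) s t) (hu : HasDerivWithinAt u u' s t)
    (hψ : HasDerivWithinAt ψ (-Hpx H t (x t) (u t) (ψ t)) s t)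
    (hmax : Hpu H t (x t) (u t) (ψ t) = 0)
    (hξ : HasDerivWithinAt ξ ξ' s t) (hτ : HasDerivWithinAt τ τ' s t) :
    HasDerivWithinAt (fun r => ⟪ψ r, ξ r⟫ - H r (x r) (u r) (ψ r) * τ r)
      (-(Hpt H t (x t) (u t) (ψ t) * τ t + ⟪Hpx H t (x t) (u t) (ψ t), ξ t⟫
        - ⟪ψ t, ξ'⟫ + H t (x t) (u t) (ψ t) * τ')) s t := by
  refine ((hψ.inner ℝ hξ).sub
    ((hasDerivWithinAt_hamiltonian_of_extremal hH hx hu hψ hmax).mul hτ)).congr_deriv ?_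
  rw [inner_neg_left]
  ring

end Hamiltonian

theorem stmt_0_general {n m : ℕ} {a b : ℝ} (hab : a < b)
    (L : ℝ → Vec n → Vec m → ℝ) (φ : ℝ → Vec n → Vec m → Vec n)
    (hL : ContDiff ℝ 1 (fun p : ℝ × Vec n × Vec m => L p.1 p.2.1 p.2.2))
    (hφ : ContDiff ℝ 1 (fun p : ℝ × Vec n × Vec m => φ p.1 p.2.1 p.2.2))
    (T : ℝ → Vec n → Vec m → Vec n → ℝ) (X : ℝ → Vec n → Vec m → Vec n → Vec n)
    (hT : ContDiff ℝ 1 (fun p : ℝ × Vec n × Vec m × Vec n => T p.1 p.2.1 p.2.2.1 p.2.2.2))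
    (hX : ContDiff ℝ 1 (fun p : ℝ × Vec n × Vec m × Vec n => X p.1 p.2.1 p.2.2.1 p.2.2.2))
    -- the trajectory: continuously differentiable on [a,b]
    (x ψ : ℝ → Vec n) (u : ℝ → Vec m)
    (hx : ContDiffOn ℝ 1 x (Icc a b)) (hψ : ContDiffOn ℝ 1 ψ (Icc a b))
    (hu : ContDiffOn ℝ 1 u (Icc a b))
    -- the infinitesimal generators evaluated along the trajectory
    (τ : ℝ → ℝ) (ξ : ℝ → Vec n) (υ : ℝ → Vec m) (π : ℝ → Vec n)
    (hτ : ∀ t, τ t = T t (x t) (u t) (ψ t))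
    (hξ : ∀ t, ξ t = X t (x t) (u t) (ψ t))
    -- (i) the control system
    (hcs : ∀ t ∈ Icc a b, derivWithin x (Icc a b) t = φ t (x t) (u t))
    -- (ii) the adjoint system
    (has : ∀ t ∈ Icc a b,
      derivWithin ψ (Icc a b) t = -Hpx (Ham L φ) t (x t) (u t) (ψ t))
    -- (iii) the maximality condition
    (hmc : ∀ t ∈ Icc a b, Hpu (Ham L φ) t (x t) (u t) (ψ t) = 0)
    -- (iv) the invariance identity
    (hinv : ∀ t ∈ Icc a b,
      Hpt (Ham L φ) t (x t) (u t) (ψ t) * τ t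
        + ⟪Hpx (Ham L φ) t (x t) (u t) (ψ t), ξ t⟫
        + ⟪Hpu (Ham L φ) t (x t) (u t) (ψ t), υ t⟫
        + ⟪Hpψ (Ham L φ) t (x t) (u t) (ψ t), π t⟫
        - ⟪π t, derivWithin x (Icc a b) t⟫
        - ⟪ψ t, derivWithin ξ (Icc a b) t⟫
        + Ham L φ t (x t) (u t) (ψ t) * derivWithin τ (Icc a b) t = 0) :
    ∃ c : ℝ, ∀ t ∈ Icc a b,
      ⟪ψ t, ξ t⟫ - Ham L φ t (x t) (u t) (ψ t) * τ t = c := by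
  have hHam : Differentiable ℝ ↿(Ham L φ) :=
    (contDiff_uncurry_ham hL hφ).differentiable one_ne_zero
  have hγ : DifferentiableOn ℝ (fun r => (r, x r, u r, ψ r)) (Icc a b) :=
    differentiableOn_id.prodMk ((hx.differentiableOn one_ne_zero).prodMk
      ((hu.differentiableOn one_ne_zero).prodMk (hψ.differentiableOn one_ne_zero)))
  have hτd : DifferentiableOn ℝ τ (Icc a b) :=
    funext hτ ▸ (hT.differentiable one_ne_zero).comp_differentiableOn hγ
  have hξd : DifferentiableOn ℝ ξ (Icc a b) :=
    funext hξ ▸ (hX.differentiable one_ne_zero).comp_differentiableOn hγ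
  have hcharge : ∀ t ∈ Icc a b, HasDerivWithinAt
      (fun r => ⟪ψ r, ξ r⟫ - Ham L φ r (x r) (u r) (ψ r) * τ r) 0 (Icc a b) t := by
    intro t ht
    have hxt := ((hx.differentiableOn one_ne_zero) t ht).hasDerivWithinAt
    have hψt := ((hψ.differentiableOn one_ne_zero) t ht).hasDerivWithinAt
    rw [hcs t ht, ← Hpψ_ham L φ] at hxt
    rw [has t ht] at hψt
    convert hasDerivWithinAt_noether_charge (hHam _) hxt
      ((hu.differentiableOn one_ne_zero) t ht).hasDerivWithinAt hψt (hmc t ht)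
      (hξd t ht).hasDerivWithinAt (hτd t ht).hasDerivWithinAt using 1
    rw [← neg_zero, ← hinv t ht, hmc t ht, hcs t ht, Hpψ_ham, real_inner_comm (π t),
      inner_zero_left]
    ring
  refine ⟨_, constant_of_derivWithin_zero (fun t ht => (hcharge t ht).differentiableWithinAt)
    fun t ht => ?_⟩
  have ht' := Ico_subset_Icc_self ht
  exact (hcharge t ht').derivWithin (uniqueDiffOn_Icc hab t ht')

/-- **Noether's theorem for optimal control** (Theorem 1 of the paper):
along a Pontryagin extremal of an invariant problem, `⟨ψ, ξ⟩ - H·τ` is constant. -/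
theorem stmt_0 {n m : ℕ} {a b : ℝ} (hab : a < b)
    (L : ℝ → Vec n → Vec m → ℝ) (φ : ℝ → Vec n → Vec m → Vec n)
    (hL : ContDiff ℝ 1 (fun p : ℝ × Vec n × Vec m => L p.1 p.2.1 p.2.2))
    (hφ : ContDiff ℝ 1 (fun p : ℝ × Vec n × Vec m => φ p.1 p.2.1 p.2.2))
    (T : ℝ → Vec n → Vec m → Vec n → ℝ) (X : ℝ → Vec n → Vec m → Vec n → Vec n)
    (U : ℝ → Vec n → Vec m → Vec n → Vec m) (Ψ : ℝ → Vec n → Vec m → Vec n → Vec n)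
    (hT : ContDiff ℝ 1 (fun p : ℝ × Vec n × Vec m × Vec n => T p.1 p.2.1 p.2.2.1 p.2.2.2))
    (hX : ContDiff ℝ 1 (fun p : ℝ × Vec n × Vec m × Vec n => X p.1 p.2.1 p.2.2.1 p.2.2.2))
    (hU : ContDiff ℝ 1 (fun p : ℝ × Vec n × Vec m × Vec n => U p.1 p.2.1 p.2.2.1 p.2.2.2))
    (hΨ : ContDiff ℝ 1 (fun p : ℝ × Vec n × Vec m × Vec n => Ψ p.1 p.2.1 p.2.2.1 p.2.2.2))
    -- the trajectory: continuously differentiable on [a,b]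
    (x ψ : ℝ → Vec n) (u : ℝ → Vec m)
    (hx : ContDiffOn ℝ 1 x (Icc a b)) (hψ : ContDiffOn ℝ 1 ψ (Icc a b))
    (hu : ContDiffOn ℝ 1 u (Icc a b))
    -- the infinitesimal generators evaluated along the trajectory
    (τ : ℝ → ℝ) (ξ : ℝ → Vec n) (υ : ℝ → Vec m) (π : ℝ → Vec n)
    (hτ : ∀ t, τ t = T t (x t) (u t) (ψ t))
    (hξ : ∀ t, ξ t = X t (x t) (u t) (ψ t))
    (hυ : ∀ t, υ t = U t (x t) (u t) (ψ t))
    (hπ : ∀ t, π t = Ψ t (x t) (u t) (ψ t))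
    -- (i) the control system
    (hcs : ∀ t ∈ Icc a b, derivWithin x (Icc a b) t = φ t (x t) (u t))
    -- (ii) the adjoint system
    (has : ∀ t ∈ Icc a b,
      derivWithin ψ (Icc a b) t = -Hpx (Ham L φ) t (x t) (u t) (ψ t))
    -- (iii) the maximality condition
    (hmc : ∀ t ∈ Icc a b, Hpu (Ham L φ) t (x t) (u t) (ψ t) = 0)
    -- (iv) the invariance identity
    (hinv : ∀ t ∈ Icc a b,
      Hpt (Ham L φ) t (x t) (u t) (ψ t) * τ t
        + ⟪Hpx (Ham L φ) t (x t) (u t) (ψ t), ξ t⟫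
        + ⟪Hpu (Ham L φ) t (x t) (u t) (ψ t), υ t⟫
        + ⟪Hpψ (Ham L φ) t (x t) (u t) (ψ t), π t⟫
        - ⟪π t, derivWithin x (Icc a b) t⟫
        - ⟪ψ t, derivWithin ξ (Icc a b) t⟫
        + Ham L φ t (x t) (u t) (ψ t) * derivWithin τ (Icc a b) t = 0) :
    ∃ c : ℝ, ∀ t ∈ Icc a b,
      ⟪ψ t, ξ t⟫ - Ham L φ t (x t) (u t) (ψ t) * τ t = c :=
  stmt_0_general hab L φ hL hφ T X hT hX x ψ u hx hψ hu τ ξ υ π hτ hξ hcs has hmc hinv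
end
end

section
/- Let x̃, ψ̃ : [a,b] → ℝ^n and ũ : [a,b] → ℝ^m be continuously differentiable, and suppose that for every t ∈ [a,b]: x̃′(t) = ∇_ψH(t,x̃(t),ũ(t),ψ̃(t)) (= φ(t,x̃(t),ũ(t))), ψ̃′(t) = −∇ₓH(t,x̃(t),ũ(t),ψ̃(t)), and ∇ᵤH(t,x̃(t),ũ(t),ψ̃(t)) = 0. Then the function t ↦ H(t, x̃(t), ũ(t), ψ̃(t)) is differentiable on [a,b] and its derivative at each t ∈ [a,b] equals ∂H/∂t (t, x̃(t), ũ(t), ψ̃(t)). -/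
open MeasureTheory Set RealInnerProductSpace

noncomputable section

/-!
Along the curve `γ s = (s, x̃ s, ũ s, ψ̃ s)` the chain rule gives
`d/ds H(γ s) = ∂H/∂t + ⟪∇ₓH, x̃'⟫ + ⟪∇ᵤH, ũ'⟫ + ⟪∇_ψH, ψ̃'⟫`.
On an extremal the control term vanishes by the maximality condition, and since
`x̃' = ∇_ψH` and `ψ̃' = -∇ₓH` the state and costate terms cancel.
-/

section TotalDerivative

variable {E U P : Type*}
  [NormedAddCommGroup E] [InnerProductSpace ℝ E] [CompleteSpace E]
  [NormedAddCommGroup U] [InnerProductSpace ℝ U] [CompleteSpace U]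
  [NormedAddCommGroup P] [InnerProductSpace ℝ P] [CompleteSpace P]
  {H : ℝ → E → U → P → ℝ} {t : ℝ} {x : E} {u : U} {ψ : P}

theorem fderiv_apply_eq_sum_partials
    (hH : DifferentiableAt ℝ (fun p : ℝ × E × U × P => H p.1 p.2.1 p.2.2.1 p.2.2.2)
      (t, x, u, ψ))
    (τ : ℝ) (v : E) (w : U) (q : P) :
    fderiv ℝ (fun p : ℝ × E × U × P => H p.1 p.2.1 p.2.2.1 p.2.2.2) (t, x, u, ψ)
        (τ, v, w, q) =
      τ * deriv (fun s => H s x u ψ) t + ⟪gradient (fun y => H t y u ψ) x, v⟫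
        + ⟪gradient (fun y => H t x y ψ) u, w⟫ + ⟪gradient (fun y => H t x u y) ψ, q⟫ := by
  set D := fderiv ℝ (fun p : ℝ × E × U × P => H p.1 p.2.1 p.2.2.1 p.2.2.2) (t, x, u, ψ)
  have hD := hH.hasFDerivAt
  have h_t : deriv (fun s => H s x u ψ) t = D (1, 0, 0, 0) := by
    have hslice := (hasDerivAt_id t).prodMk ((hasDerivAt_const t x).prodMk
      ((hasDerivAt_const t u).prodMk (hasDerivAt_const t ψ)))
    exact (hD.comp_hasDerivAt t hslice).deriv
  have h_x : fderiv ℝ (fun y => H t y u ψ) x v = D (0, v, 0, 0) := by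
    have hslice := (hasFDerivAt_const (𝕜 := ℝ) t x).prodMk
      ((hasFDerivAt_id (𝕜 := ℝ) x).prodMk
        ((hasFDerivAt_const (𝕜 := ℝ) u x).prodMk (hasFDerivAt_const (𝕜 := ℝ) ψ x)))
    exact DFunLike.congr_fun (hD.comp x hslice).fderiv v
  have h_u : fderiv ℝ (fun y => H t x y ψ) u w = D (0, 0, w, 0) := by
    have hslice := (hasFDerivAt_const (𝕜 := ℝ) t u).prodMk
      ((hasFDerivAt_const (𝕜 := ℝ) x u).prodMk
        ((hasFDerivAt_id (𝕜 := ℝ) u).prodMk (hasFDerivAt_const (𝕜 := ℝ) ψ u)))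
    exact DFunLike.congr_fun (hD.comp u hslice).fderiv w
  have h_ψ : fderiv ℝ (fun y => H t x u y) ψ q = D (0, 0, 0, q) := by
    have hslice := (hasFDerivAt_const (𝕜 := ℝ) t ψ).prodMk
      ((hasFDerivAt_const (𝕜 := ℝ) x ψ).prodMk
        ((hasFDerivAt_const (𝕜 := ℝ) u ψ).prodMk (hasFDerivAt_id (𝕜 := ℝ) ψ)))
    exact DFunLike.congr_fun (hD.comp ψ hslice).fderiv q
  rw [inner_gradient_left, inner_gradient_left, inner_gradient_left, h_t, h_x, h_u, h_ψ,
    ← smul_eq_mul, ← map_smul, ← map_add, ← map_add, ← map_add]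
  simp

theorem hasDerivWithinAt_comp_curve_eq_sum_partials {s : Set ℝ}
    {xe : ℝ → E} {ue : ℝ → U} {ψe : ℝ → P} {x' : E} {u' : U} {ψ' : P}
    (hH : DifferentiableAt ℝ (fun p : ℝ × E × U × P => H p.1 p.2.1 p.2.2.1 p.2.2.2)
      (t, xe t, ue t, ψe t))
    (hx : HasDerivWithinAt xe x' s t) (hu : HasDerivWithinAt ue u' s t)
    (hψ : HasDerivWithinAt ψe ψ' s t) :
    HasDerivWithinAt (fun r => H r (xe r) (ue r) (ψe r))
      (deriv (fun r => H r (xe t) (ue t) (ψe t)) t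
        + ⟪gradient (fun y => H t y (ue t) (ψe t)) (xe t), x'⟫
        + ⟪gradient (fun y => H t (xe t) y (ψe t)) (ue t), u'⟫
        + ⟪gradient (fun y => H t (xe t) (ue t) y) (ψe t), ψ'⟫) s t := by
  have hcurve := (hasDerivWithinAt_id t s).prodMk (hx.prodMk (hu.prodMk hψ))
  have := hH.hasFDerivAt.comp_hasDerivWithinAt t hcurve
  rwa [fderiv_apply_eq_sum_partials hH, one_mul] at this

end TotalDerivative

theorem differentiable_ham {n m : ℕ} {L : ℝ → Vec n → Vec m → ℝ}
    {φ : ℝ → Vec n → Vec m → Vec n}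
    (hL : Differentiable ℝ (fun p : ℝ × Vec n × Vec m => L p.1 p.2.1 p.2.2))
    (hφ : Differentiable ℝ (fun p : ℝ × Vec n × Vec m => φ p.1 p.2.1 p.2.2)) :
    Differentiable ℝ
      (fun p : ℝ × Vec n × Vec m × Vec n => Ham L φ p.1 p.2.1 p.2.2.1 p.2.2.2) := by
  have hproj : Differentiable ℝ
      (fun p : ℝ × Vec n × Vec m × Vec n => (p.1, p.2.1, p.2.2.1)) := by fun_prop
  have hψ : Differentiable ℝ (fun p : ℝ × Vec n × Vec m × Vec n => p.2.2.2) := by fun_prop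
  exact (hL.comp hproj).neg.add (hψ.inner ℝ (hφ.comp hproj))

theorem stmt_6_general {n m : ℕ} {a b : ℝ}
    (L : ℝ → Vec n → Vec m → ℝ) (φ : ℝ → Vec n → Vec m → Vec n)
    (hL : ContDiff ℝ 1 (fun p : ℝ × Vec n × Vec m => L p.1 p.2.1 p.2.2))
    (hφ : ContDiff ℝ 1 (fun p : ℝ × Vec n × Vec m => φ p.1 p.2.1 p.2.2))
    (xe ψe : ℝ → Vec n) (ue : ℝ → Vec m)
    (hxe : ContDiffOn ℝ 1 xe (Icc a b)) (hψe : ContDiffOn ℝ 1 ψe (Icc a b))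
    (hue : ContDiffOn ℝ 1 ue (Icc a b))
    -- the control system
    (hcs : ∀ t ∈ Icc a b,
      derivWithin xe (Icc a b) t = Hpψ (Ham L φ) t (xe t) (ue t) (ψe t)
        ∧ Hpψ (Ham L φ) t (xe t) (ue t) (ψe t) = φ t (xe t) (ue t))
    -- the adjoint system
    (has : ∀ t ∈ Icc a b,
      derivWithin ψe (Icc a b) t = -Hpx (Ham L φ) t (xe t) (ue t) (ψe t))
    -- the maximality condition
    (hmc : ∀ t ∈ Icc a b, Hpu (Ham L φ) t (xe t) (ue t) (ψe t) = 0) :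
    ∀ t ∈ Icc a b,
      HasDerivWithinAt (fun s => Ham L φ s (xe s) (ue s) (ψe s))
        (Hpt (Ham L φ) t (xe t) (ue t) (ψe t)) (Icc a b) t := by
  intro t ht
  have hH := differentiable_ham (hL.differentiable one_ne_zero) (hφ.differentiable one_ne_zero)
    (t, xe t, ue t, ψe t)
  have hderiv {k : ℕ} {f : ℝ → Vec k} (hf : ContDiffOn ℝ 1 f (Icc a b)) :
      HasDerivWithinAt f (derivWithin f (Icc a b) t) (Icc a b) t :=
    (hf.differentiableOn one_ne_zero t ht).hasDerivWithinAt
  refine (hasDerivWithinAt_comp_curve_eq_sum_partials hH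
    (hderiv hxe) (hderiv hue) (hderiv hψe)).congr_deriv ?_
  change Hpt (Ham L φ) t _ _ _ + ⟪Hpx (Ham L φ) t _ _ _, _⟫ + ⟪Hpu (Ham L φ) t _ _ _, _⟫
    + ⟪Hpψ (Ham L φ) t _ _ _, _⟫ = _
  rw [(hcs t ht).1, has t ht, hmc t ht, inner_zero_left, inner_neg_right, real_inner_comm]
  ring

/-- Property (2.9) of the paper: along a Pontryagin extremal, the total time derivative
of the Hamiltonian equals its partial time derivative. -/
theorem stmt_6 {n m : ℕ} {a b : ℝ} (hab : a < b)
    (L : ℝ → Vec n → Vec m → ℝ) (φ : ℝ → Vec n → Vec m → Vec n)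
    (hL : ContDiff ℝ 1 (fun p : ℝ × Vec n × Vec m => L p.1 p.2.1 p.2.2))
    (hφ : ContDiff ℝ 1 (fun p : ℝ × Vec n × Vec m => φ p.1 p.2.1 p.2.2))
    (xe ψe : ℝ → Vec n) (ue : ℝ → Vec m)
    (hxe : ContDiffOn ℝ 1 xe (Icc a b)) (hψe : ContDiffOn ℝ 1 ψe (Icc a b))
    (hue : ContDiffOn ℝ 1 ue (Icc a b))
    -- the control system
    (hcs : ∀ t ∈ Icc a b,
      derivWithin xe (Icc a b) t = Hpψ (Ham L φ) t (xe t) (ue t) (ψe t)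
        ∧ Hpψ (Ham L φ) t (xe t) (ue t) (ψe t) = φ t (xe t) (ue t))
    -- the adjoint system
    (has : ∀ t ∈ Icc a b,
      derivWithin ψe (Icc a b) t = -Hpx (Ham L φ) t (xe t) (ue t) (ψe t))
    -- the maximality condition
    (hmc : ∀ t ∈ Icc a b, Hpu (Ham L φ) t (xe t) (ue t) (ψe t) = 0) :
    ∀ t ∈ Icc a b,
      HasDerivWithinAt (fun s => Ham L φ s (xe s) (ue s) (ψe s))
        (Hpt (Ham L φ) t (xe t) (ue t) (ψe t)) (Icc a b) t :=
  stmt_6_general L φ hL hφ xe ψe ue hxe hψe hue hcs has hmc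
end
end

section
/- Let h = (h_t, h_x, h_u, h_ψ) : ℝ × ℝ^n × ℝ^m × ℝ^n × ℝ → ℝ × ℝ^n × ℝ^m × ℝ^n be twice continuously differentiable with h(t,x,u,ψ,0) = (t,x,u,ψ) for all (t,x,u,ψ), and define the infinitesimal generators T(t,x,u,ψ) = ∂h_t/∂s(t,x,u,ψ,0), X(t,x,u,ψ) = ∂h_x/∂s(t,x,u,ψ,0), U(t,x,u,ψ) = ∂h_u/∂s(t,x,u,ψ,0), Ψ(t,x,u,ψ) = ∂h_ψ/∂s(t,x,u,ψ,0). Let x, ψ : [a,b] → ℝ^n and u : [a,b] → ℝ^m be continuously differentiable, and fix t ∈ (a,b). Then the function s ↦ [ H(h(t,x(t),u(t),ψ(t),s)) − ⟨ h_ψ(t,x(t),u(t),ψ(t),s), (d/dt h_x(t,x(t),u(t),ψ(t),s)) / (d/dt h_t(t,x(t),u(t),ψ(t),s)) ⟩ ] · (d/dt h_t(t,x(t),u(t),ψ(t),s)) is differentiable at s = 0, and its derivative at s = 0 equals ∂H/∂t · τ(t) + ⟨∇ₓH, ξ(t)⟩ + ⟨∇ᵤH, υ(t)⟩ + ⟨∇_ψH,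 π(t)⟩ − ⟨π(t), x′(t)⟩ − ⟨ψ(t), ξ′(t)⟩ + H · τ′(t), where τ(t) = T(t,x(t),u(t),ψ(t)), ξ(t) = X(t,x(t),u(t),ψ(t)), υ(t) = U(t,x(t),u(t),ψ(t)), π(t) = Ψ(t,x(t),u(t),ψ(t)), and H and its partial derivatives are evaluated at (t,x(t),u(t),ψ(t)). In particular, invariance in the sense of Definition 1 at time t is equivalent to the identity ∂H/∂t · τ(t) + ⟨∇ₓH, ξ(t)⟩ + ⟨∇ᵤH, υ(t)⟩ + ⟨∇_ψH, π(t)⟩ − ⟨π(t), x′(t)⟩ − ⟨ψ(t), ξ′(t)⟩ + H · τ′(t) = 0. -/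
/-!
Since `h` is the identity at `s = 0`, the `t`-derivatives of `h_t` and `h_x` along the trajectory
are `1` and `x'(t)` there, so the quotient in Definition 1 is harmless and the product rule
expresses the derivative through the `s`-derivatives of `H ∘ h`, `h_ψ`, `∂ₜh_t` and `∂ₜh_x` at
`s = 0`. The first two are `dH` applied to the generators and `Ψ`; for the last two, symmetry of
the second derivative of the C² map `h` turns `∂ₛ∂ₜ` into `∂ₜ∂ₛ`, which gives `τ'` and `ξ'`.
-/

open MeasureTheory Set RealInnerProductSpace

noncomputable section

open Topology

section Curves

variable {E F : Type*} [NormedAddCommGroup E] [NormedSpace ℝ E]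
  [NormedAddCommGroup F] [NormedSpace ℝ F] {c : ℝ → E × F} {c' : E × F} {s : ℝ}

theorem HasDerivAt.fst' (hc : HasDerivAt c c' s) : HasDerivAt (fun r => (c r).1) c'.1 s :=
  (ContinuousLinearMap.fst ℝ E F).hasFDerivAt.comp_hasDerivAt s hc

theorem HasDerivAt.snd' (hc : HasDerivAt c c' s) : HasDerivAt (fun r => (c r).2) c'.2 s :=
  (ContinuousLinearMap.snd ℝ E F).hasFDerivAt.comp_hasDerivAt s hc

theorem DifferentiableAt.hasDerivAt_prod4 {G K : Type*} [NormedAddCommGroup G] [NormedSpace ℝ G]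
    [NormedAddCommGroup K] [NormedSpace ℝ K] {c : ℝ → E × F × G × K}
    (hc : DifferentiableAt ℝ c s) :
    HasDerivAt c (deriv (fun r => (c r).1) s, deriv (fun r => (c r).2.1) s,
      deriv (fun r => (c r).2.2.1) s, deriv (fun r => (c r).2.2.2) s) s := by
  rw [hc.hasDerivAt.fst'.deriv, hc.hasDerivAt.snd'.fst'.deriv, hc.hasDerivAt.snd'.snd'.fst'.deriv,
    hc.hasDerivAt.snd'.snd'.snd'.deriv]
  exact hc.hasDerivAt

end Curves

section SecondDerivative

variable {D W : Type*} [NormedAddCommGroup D] [NormedSpace ℝ D]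
  [NormedAddCommGroup W] [NormedSpace ℝ W] {f : D → W}

theorem ContDiff.hasDerivAt_fderiv_apply (hf : ContDiff ℝ 2 f) {γ : ℝ → D} {e : D} {s : ℝ}
    (hγ : HasDerivAt γ e s) (w : D) :
    HasDerivAt (fun r => fderiv ℝ f (γ r) w) (fderiv ℝ (fderiv ℝ f) (γ s) e w) s :=
  (ContinuousLinearMap.apply ℝ W w).hasFDerivAt.comp_hasDerivAt s <|
    ((hf.fderiv_right (by norm_num)).differentiable one_ne_zero (γ s)).hasFDerivAt.comp_hasDerivAt
      s hγ

theorem ContDiff.hasDerivAt_deriv_comm (hf : ContDiff ℝ 2 f) {ρ : ℝ → ℝ → D} {t : ℝ} {w e : D}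
    (hr : ∀ s, HasDerivAt (ρ s) w t) (hs : ∀ r, HasDerivAt (fun s => ρ s r) e 0) :
    HasDerivAt (fun s => deriv (fun r => f (ρ s r)) t)
      (deriv (fun r => deriv (fun s => f (ρ s r)) 0) t) 0 := by
  have hdf : Differentiable ℝ f := hf.differentiable two_ne_zero
  have deriv_r : (fun s => deriv (fun r => f (ρ s r)) t) = fun s => fderiv ℝ f (ρ s t) w :=
    funext fun s => ((hdf _).hasFDerivAt.comp_hasDerivAt t (hr s)).deriv
  have deriv_s : (fun r => deriv (fun s => f (ρ s r)) 0) = fun r => fderiv ℝ f (ρ 0 r) e :=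
    funext fun r => ((hdf _).hasFDerivAt.comp_hasDerivAt 0 (hs r)).deriv
  rw [deriv_r, deriv_s, (hf.hasDerivAt_fderiv_apply (hr 0) e).deriv,
    ← hf.contDiffAt.isSymmSndFDerivAt (by simp)]
  exact hf.hasDerivAt_fderiv_apply (hs t) w

end SecondDerivative

def uncurry4 {n m : ℕ} (H : ℝ → Vec n → Vec m → Vec n → ℝ) : ℝ × Vec n × Vec m × Vec n → ℝ :=
  fun z => H z.1 z.2.1 z.2.2.1 z.2.2.2

theorem fderiv_uncurry4_apply {n m : ℕ} {H : ℝ → Vec n → Vec m → Vec n → ℝ} {t : ℝ} {x : Vec n}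
    {u : Vec m} {ψ : Vec n} (hH : DifferentiableAt ℝ (uncurry4 H) (t, x, u, ψ))
    (τ : ℝ) (ξ : Vec n) (υ : Vec m) (π : Vec n) :
    fderiv ℝ (uncurry4 H) (t, x, u, ψ) (τ, ξ, υ, π)
      = Hpt H t x u ψ * τ + ⟪Hpx H t x u ψ, ξ⟫ + ⟪Hpu H t x u ψ, υ⟫ + ⟪Hpψ H t x u ψ, π⟫ := by
  set Φ := fderiv ℝ (uncurry4 H) (t, x, u, ψ)
  have hΦ : HasFDerivAt (uncurry4 H) Φ (t, x, u, ψ) := hH.hasFDerivAt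
  have dt : HasDerivAt (fun r => H r x u ψ) (Φ (1, 0, 0, 0)) t :=
    hΦ.comp_hasDerivAt (f := fun r => (r, x, u, ψ)) t ((hasDerivAt_id t).prodMk
      ((hasDerivAt_const t x).prodMk ((hasDerivAt_const t u).prodMk (hasDerivAt_const t ψ))))
  have dx : HasFDerivAt (fun y => H t y u ψ) _ x :=
    hΦ.comp (f := fun y => (t, y, u, ψ)) x ((hasFDerivAt_const t x).prodMk
      ((hasFDerivAt_id x).prodMk ((hasFDerivAt_const u x).prodMk (hasFDerivAt_const ψ x))))
  have du : HasFDerivAt (fun v => H t x v ψ) _ u :=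
    hΦ.comp (f := fun v => (t, x, v, ψ)) u ((hasFDerivAt_const t u).prodMk
      ((hasFDerivAt_const x u).prodMk ((hasFDerivAt_id u).prodMk (hasFDerivAt_const ψ u))))
  have dψ : HasFDerivAt (fun q => H t x u q) _ ψ :=
    hΦ.comp (f := fun q => (t, x, u, q)) ψ ((hasFDerivAt_const t ψ).prodMk
      ((hasFDerivAt_const x ψ).prodMk ((hasFDerivAt_const u ψ).prodMk (hasFDerivAt_id ψ))))
  have split : ((τ, ξ, υ, π) : ℝ × Vec n × Vec m × Vec n)
      = τ • (1, 0, 0, 0) + (0, ξ, 0, 0) + (0, 0, υ, 0) + (0, 0, 0, π) := by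
    simp
  rw [Hpt, Hpx, Hpu, Hpψ, dt.deriv, inner_gradient_left, inner_gradient_left, inner_gradient_left,
    dx.fderiv, du.fderiv, dψ.fderiv, split, map_add, map_add, map_add, map_smul, smul_eq_mul,
    mul_comm]
  rfl

theorem HasDerivAt.uncurry4_comp {n m : ℕ} {H : ℝ → Vec n → Vec m → Vec n → ℝ} {t : ℝ}
    {x : Vec n} {u : Vec m} {ψ : Vec n} {τ : ℝ} {ξ : Vec n} {υ : Vec m} {π : Vec n}
    {c : ℝ → ℝ × Vec n × Vec m × Vec n} {s : ℝ}
    (hH : DifferentiableAt ℝ (uncurry4 H) (t, x, u, ψ)) (hc : HasDerivAt c (τ, ξ, υ, π) s)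
    (hcs : c s = (t, x, u, ψ)) :
    HasDerivAt (fun r => H (c r).1 (c r).2.1 (c r).2.2.1 (c r).2.2.2)
      (Hpt H t x u ψ * τ + ⟪Hpx H t x u ψ, ξ⟫ + ⟪Hpu H t x u ψ, υ⟫ + ⟪Hpψ H t x u ψ, π⟫) s := by
  rw [← fderiv_uncurry4_apply hH]
  exact HasFDerivAt.comp_hasDerivAt (l := uncurry4 H) s (hcs ▸ hH.hasFDerivAt) hc

theorem contDiff_uncurry4_ham {n m : ℕ} {L : ℝ → Vec n → Vec m → ℝ}
    {φ : ℝ → Vec n → Vec m → Vec n}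
    (hL : ContDiff ℝ 1 (fun p : ℝ × Vec n × Vec m => L p.1 p.2.1 p.2.2))
    (hφ : ContDiff ℝ 1 (fun p : ℝ × Vec n × Vec m => φ p.1 p.2.1 p.2.2)) :
    ContDiff ℝ 1 (uncurry4 (Ham L φ)) := by
  have hpr : ContDiff ℝ 1 (fun z : ℝ × Vec n × Vec m × Vec n => (z.1, z.2.1, z.2.2.1)) := by
    fun_prop
  exact (hL.comp hpr).neg.add ((contDiff_snd.comp (contDiff_snd.comp contDiff_snd)).inner ℝ
    (hφ.comp hpr))

/-- Where `g ≠ 0` the function is `A * g - ⟪P, V⟫`. -/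
theorem HasDerivAt.mul_sub_inner_inv_smul {E : Type*} [NormedAddCommGroup E]
    [InnerProductSpace ℝ E] {A g : ℝ → ℝ} {P V : ℝ → E} {A' g' : ℝ} {P' V' : E} {s : ℝ}
    (hA : HasDerivAt A A' s) (hP : HasDerivAt P P' s) (hg : HasDerivAt g g' s)
    (hV : HasDerivAt V V' s) (hg₁ : g s = 1) :
    HasDerivAt (fun r => (A r - ⟪P r, (g r)⁻¹ • V r⟫) * g r)
      (A' - ⟪P', V s⟫ - ⟪P s, V'⟫ + A s * g') s := by
  refine ((hA.sub (hP.inner ℝ ((hg.inv (by simp [hg₁])).smul hV))).mul hg).congr_deriv ?_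
  simp only [Pi.sub_apply, Pi.smul_apply', Pi.inv_apply, hg₁, inv_one, one_smul, inner_add_right,
    inner_smul_right]
  ring

theorem stmt_7_general {n m : ℕ} {a b : ℝ}
    (L : ℝ → Vec n → Vec m → ℝ) (φ : ℝ → Vec n → Vec m → Vec n)
    (hL : ContDiff ℝ 1 (fun p : ℝ × Vec n × Vec m => L p.1 p.2.1 p.2.2))
    (hφ : ContDiff ℝ 1 (fun p : ℝ × Vec n × Vec m => φ p.1 p.2.1 p.2.2))
    -- the one-parameter group of transformations, C², identity at s = 0
    (h : ℝ × Vec n × Vec m × Vec n × ℝ → ℝ × Vec n × Vec m × Vec n)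
    (hh : ContDiff ℝ 2 h)
    (hid : ∀ (t : ℝ) (xx : Vec n) (uu : Vec m) (pp : Vec n),
      h (t, xx, uu, pp, 0) = (t, xx, uu, pp))
    -- the infinitesimal generators
    (T : ℝ → Vec n → Vec m → Vec n → ℝ) (X : ℝ → Vec n → Vec m → Vec n → Vec n)
    (U : ℝ → Vec n → Vec m → Vec n → Vec m) (Ψ : ℝ → Vec n → Vec m → Vec n → Vec n)
    (hT : ∀ t xx uu pp, T t xx uu pp = deriv (fun s => (h (t, xx, uu, pp, s)).1) 0)
    (hX : ∀ t xx uu pp, X t xx uu pp = deriv (fun s => (h (t, xx, uu, pp, s)).2.1) 0)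
    (hU : ∀ t xx uu pp, U t xx uu pp = deriv (fun s => (h (t, xx, uu, pp, s)).2.2.1) 0)
    (hΨ : ∀ t xx uu pp, Ψ t xx uu pp = deriv (fun s => (h (t, xx, uu, pp, s)).2.2.2) 0)
    -- the trajectory, C¹ on [a,b], and an interior time t
    (x ψ : ℝ → Vec n) (u : ℝ → Vec m)
    (hx : ContDiffOn ℝ 1 x (Icc a b)) (hψ : ContDiffOn ℝ 1 ψ (Icc a b))
    (hu : ContDiffOn ℝ 1 u (Icc a b))
    (t : ℝ) (ht : t ∈ Ioo a b)
    -- the function of the parameter s appearing in Definition 1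
    (F : ℝ → ℝ)
    (hF : F = fun s =>
      (Ham L φ (h (t, x t, u t, ψ t, s)).1 (h (t, x t, u t, ψ t, s)).2.1
          (h (t, x t, u t, ψ t, s)).2.2.1 (h (t, x t, u t, ψ t, s)).2.2.2
        - ⟪(h (t, x t, u t, ψ t, s)).2.2.2,
            (derivWithin (fun r => (h (r, x r, u r, ψ r, s)).1) (Icc a b) t)⁻¹ •
              derivWithin (fun r => (h (r, x r, u r, ψ r, s)).2.1) (Icc a b) t⟫)
        * derivWithin (fun r => (h (r, x r, u r, ψ r, s)).1) (Icc a b) t)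
    -- the right-hand side of the infinitesimal identity (3.3)
    (rhs : ℝ)
    (hrhs : rhs =
      Hpt (Ham L φ) t (x t) (u t) (ψ t) * T t (x t) (u t) (ψ t)
        + ⟪Hpx (Ham L φ) t (x t) (u t) (ψ t), X t (x t) (u t) (ψ t)⟫
        + ⟪Hpu (Ham L φ) t (x t) (u t) (ψ t), U t (x t) (u t) (ψ t)⟫
        + ⟪Hpψ (Ham L φ) t (x t) (u t) (ψ t), Ψ t (x t) (u t) (ψ t)⟫
        - ⟪Ψ t (x t) (u t) (ψ t), derivWithin x (Icc a b) t⟫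
        - ⟪ψ t, derivWithin (fun r => X r (x r) (u r) (ψ r)) (Icc a b) t⟫
        + Ham L φ t (x t) (u t) (ψ t)
            * derivWithin (fun r => T r (x r) (u r) (ψ r)) (Icc a b) t) :
    HasDerivAt F rhs 0 ∧ (deriv F 0 = 0 ↔ rhs = 0) := by
  have hmem : Icc a b ∈ 𝓝 t := Icc_mem_nhds ht.1 ht.2
  simp only [derivWithin_of_mem_nhds hmem] at hF hrhs
  subst hF hrhs
  have hr : ∀ s : ℝ, HasDerivAt (fun r => (r, x r, u r, ψ r, s))
      ((1 : ℝ), deriv x t, deriv u t, deriv ψ t, (0 : ℝ)) t := fun s =>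
    (hasDerivAt_id t).prodMk
      (((hx.contDiffAt hmem).differentiableAt one_ne_zero).hasDerivAt.prodMk
      (((hu.contDiffAt hmem).differentiableAt one_ne_zero).hasDerivAt.prodMk
      (((hψ.contDiffAt hmem).differentiableAt one_ne_zero).hasDerivAt.prodMk
        (hasDerivAt_const t s))))
  have hs : ∀ r : ℝ, HasDerivAt (fun s => (r, x r, u r, ψ r, s))
      ((0 : ℝ), (0 : Vec n), (0 : Vec m), (0 : Vec n), (1 : ℝ)) 0 := fun r =>
    (hasDerivAt_const 0 r).prodMk ((hasDerivAt_const 0 (x r)).prodMk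
      ((hasDerivAt_const 0 (u r)).prodMk ((hasDerivAt_const 0 (ψ r)).prodMk (hasDerivAt_id 0))))
  have hflow : HasDerivAt (fun s => h (t, x t, u t, ψ t, s))
      (T t (x t) (u t) (ψ t), X t (x t) (u t) (ψ t), U t (x t) (u t) (ψ t),
        Ψ t (x t) (u t) (ψ t)) 0 := by
    simp only [hT, hX, hU, hΨ]
    exact ((hh.differentiable two_ne_zero _).comp 0 (hs t).differentiableAt).hasDerivAt_prod4
  have hHam := HasDerivAt.uncurry4_comp (H := Ham L φ)
    ((contDiff_uncurry4_ham hL hφ).differentiable one_ne_zero _) hflow (hid t (x t) (u t) (ψ t))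
  have hτ' : HasDerivAt (fun s => deriv (fun r => (h (r, x r, u r, ψ r, s)).1) t)
      (deriv (fun r => T r (x r) (u r) (ψ r)) t) 0 := by
    simpa only [hT] using hh.fst.hasDerivAt_deriv_comm hr hs
  have hξ' : HasDerivAt (fun s => deriv (fun r => (h (r, x r, u r, ψ r, s)).2.1) t)
      (deriv (fun r => X r (x r) (u r) (ψ r)) t) 0 := by
    simpa only [hX] using hh.snd.fst.hasDerivAt_deriv_comm hr hs
  have hτ₀ : deriv (fun r => (h (r, x r, u r, ψ r, 0)).1) t = 1 := by simp [hid]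
  have hξ₀ : deriv (fun r => (h (r, x r, u r, ψ r, 0)).2.1) t = deriv x t := by simp [hid]
  have hF := hHam.mul_sub_inner_inv_smul hflow.snd'.snd'.snd' hτ' hξ' hτ₀
  rw [hξ₀, hid] at hF
  exact ⟨hF, by rw [hF.deriv]⟩

/-- The invariance condition of Definition 1 is equivalent to the infinitesimal
identity (3.3): the function of the parameter `s` appearing in Definition 1 is
differentiable at `s = 0`, with derivative given by the left-hand side of (3.3). -/
theorem stmt_7 {n m : ℕ} {a b : ℝ} (hab : a < b)
    (L : ℝ → Vec n → Vec m → ℝ) (φ : ℝ → Vec n → Vec m → Vec n)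
    (hL : ContDiff ℝ 1 (fun p : ℝ × Vec n × Vec m => L p.1 p.2.1 p.2.2))
    (hφ : ContDiff ℝ 1 (fun p : ℝ × Vec n × Vec m => φ p.1 p.2.1 p.2.2))
    -- the one-parameter group of transformations, C², identity at s = 0
    (h : ℝ × Vec n × Vec m × Vec n × ℝ → ℝ × Vec n × Vec m × Vec n)
    (hh : ContDiff ℝ 2 h)
    (hid : ∀ (t : ℝ) (xx : Vec n) (uu : Vec m) (pp : Vec n),
      h (t, xx, uu, pp, 0) = (t, xx, uu, pp))
    -- the infinitesimal generators
    (T : ℝ → Vec n → Vec m → Vec n → ℝ) (X : ℝ → Vec n → Vec m → Vec n → Vec n)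
    (U : ℝ → Vec n → Vec m → Vec n → Vec m) (Ψ : ℝ → Vec n → Vec m → Vec n → Vec n)
    (hT : ∀ t xx uu pp, T t xx uu pp = deriv (fun s => (h (t, xx, uu, pp, s)).1) 0)
    (hX : ∀ t xx uu pp, X t xx uu pp = deriv (fun s => (h (t, xx, uu, pp, s)).2.1) 0)
    (hU : ∀ t xx uu pp, U t xx uu pp = deriv (fun s => (h (t, xx, uu, pp, s)).2.2.1) 0)
    (hΨ : ∀ t xx uu pp, Ψ t xx uu pp = deriv (fun s => (h (t, xx, uu, pp, s)).2.2.2) 0)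
    -- the trajectory, C¹ on [a,b], and an interior time t
    (x ψ : ℝ → Vec n) (u : ℝ → Vec m)
    (hx : ContDiffOn ℝ 1 x (Icc a b)) (hψ : ContDiffOn ℝ 1 ψ (Icc a b))
    (hu : ContDiffOn ℝ 1 u (Icc a b))
    (t : ℝ) (ht : t ∈ Ioo a b)
    -- the function of the parameter s appearing in Definition 1
    (F : ℝ → ℝ)
    (hF : F = fun s =>
      (Ham L φ (h (t, x t, u t, ψ t, s)).1 (h (t, x t, u t, ψ t, s)).2.1
          (h (t, x t, u t, ψ t, s)).2.2.1 (h (t, x t, u t, ψ t, s)).2.2.2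
        - ⟪(h (t, x t, u t, ψ t, s)).2.2.2,
            (derivWithin (fun r => (h (r, x r, u r, ψ r, s)).1) (Icc a b) t)⁻¹ •
              derivWithin (fun r => (h (r, x r, u r, ψ r, s)).2.1) (Icc a b) t⟫)
        * derivWithin (fun r => (h (r, x r, u r, ψ r, s)).1) (Icc a b) t)
    -- the right-hand side of the infinitesimal identity (3.3)
    (rhs : ℝ)
    (hrhs : rhs =
      Hpt (Ham L φ) t (x t) (u t) (ψ t) * T t (x t) (u t) (ψ t)
        + ⟪Hpx (Ham L φ) t (x t) (u t) (ψ t), X t (x t) (u t) (ψ t)⟫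
        + ⟪Hpu (Ham L φ) t (x t) (u t) (ψ t), U t (x t) (u t) (ψ t)⟫
        + ⟪Hpψ (Ham L φ) t (x t) (u t) (ψ t), Ψ t (x t) (u t) (ψ t)⟫
        - ⟪Ψ t (x t) (u t) (ψ t), derivWithin x (Icc a b) t⟫
        - ⟪ψ t, derivWithin (fun r => X r (x r) (u r) (ψ r)) (Icc a b) t⟫
        + Ham L φ t (x t) (u t) (ψ t)
            * derivWithin (fun r => T r (x r) (u r) (ψ r)) (Icc a b) t) :
    HasDerivAt F rhs 0 ∧ (deriv F 0 = 0 ↔ rhs = 0) :=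
  stmt_7_general L φ hL hφ h hh hid T X U Ψ hT hX hU hΨ x ψ u hx hψ hu t ht F hF rhs hrhs
end
end
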